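/- For every odd prime p, the negative of the identity map on V = (ZMod p)^5 does not lie in the product set G_4^p · G_0^p = { gh : g ∈ ⟨r_0, r_1, r_2, r_3⟩, h ∈ ⟨r_1, r_2, r_3, r_4⟩ }; equivalently, {±id} ∩ G_4^p G_0^p = {id}. -/

import Mathlib

/- Setup: the reduction mod an odd prime `p` of the rank-5 Coxeter group `[4,3,4,3]`. -/

namespace Statement17

/-- The Gram matrix of the basic system for `[4,3,4,3]` with node labels `(2,1,1,2,2)`,
reduced mod `p`. -/
def gram (p : ℕ) : Matrix (Fin 5) (Fin 5) (ZMod p) :=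
  !![2, -1, 0, 0, 0;
     -1, 1, -(2⁻¹ : ZMod p), 0, 0;
     0, -(2⁻¹ : ZMod p), 1, -1, 0;
     0, 0, -1, 2, -1;
     0, 0, 0, -1, 2]

/-- The corresponding symmetric bilinear form `x·y` on `V = (ZMod p)^5`. -/
def form (p : ℕ) (x y : Fin 5 → ZMod p) : ZMod p :=
  ∑ i, ∑ j, x i * gram p i j * y j

/-- The general linear group of `V`. -/
abbrev GLV (p : ℕ) := (Module.End (ZMod p) (Fin 5 → ZMod p))ˣ

/-- `r i` is the generating reflection `r_i : x ↦ x − 2((x·b_i)/(b_i·b_i)) b_i`. -/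
def ReflHyp (p : ℕ) (r : Fin 5 → GLV p) : Prop :=
  ∀ i x, (r i).1 x =
    x - (2 * form p x (Pi.single i 1) *
      (form p (Pi.single i 1) (Pi.single i 1))⁻¹) •
      (Pi.single i 1 : Fin 5 → ZMod p)

/-- The intersection property (string C-group condition). -/
def IsStringC (p : ℕ) (r : Fin 5 → GLV p) : Prop :=
  ∀ I J : Set (Fin 5),
    Subgroup.closure (r '' I) ⊓ Subgroup.closure (r '' J) = Subgroup.closure (r '' (I ∩ J))

/-- `O₁(V)`: the subgroup generated by all reflections `r_a` with `a·a` a nonzero square. -/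
def O1 (p : ℕ) : Subgroup (GLV p) :=
  Subgroup.closure {g | ∃ a : Fin 5 → ZMod p,
    (∃ t : ZMod p, t ≠ 0 ∧ form p a a = t ^ 2) ∧
    ∀ x, g.1 x = x - (2 * form p x a * (form p a a)⁻¹) • a}

/-- The full orthogonal group `O(V)` of the form, as a subgroup of `GL(V)`. -/
def OV (p : ℕ) : Subgroup (GLV p) where
  carrier := {g | ∀ x y, form p (g.1 x) (g.1 y) = form p x y}
  one_mem' := by intro x y; simp
  mul_mem' := by
    intro a b ha hb x y
    simpa [Units.val_mul] using (ha (b.1 x) (b.1 y)).trans (hb x y)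
  inv_mem' := by
    intro a ha x y
    have key : ∀ z, a.1 ((a⁻¹ : GLV p).1 z) = z := by
      intro z
      rw [← Module.End.mul_apply, ← Units.val_mul, mul_inv_cancel, Units.val_one,
        Module.End.one_apply]
    have h := ha ((a⁻¹ : GLV p).1 x) ((a⁻¹ : GLV p).1 y)
    rw [key, key] at h
    exact h.symm

/-! The vector `v₀ = (1,4,6,4,2)` is orthogonal to `b₁,…,b₄`, so it is fixed by `G₀ᵖ`,
and `v₄ = (1,2,2,1,0)` is orthogonal to `b₀,…,b₃`, so every element of `G₄ᵖ` preserves the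
functional `x ↦ x·v₄`. If `gh = −1` with `g ∈ G₄ᵖ` and `h ∈ G₀ᵖ`, then `g v₀ = −v₀`, hence
`v₀·v₄ = −v₀·v₄`; but `v₀·v₄ = −2`, so `4 = 0` in `ZMod p`, impossible for odd `p`. -/

open Matrix

section Reflection

variable {R M : Type*} [CommRing R] [AddCommGroup M] [Module R M]

def dualStabilizer (f : Module.Dual R M) : Subgroup (M →ₗ[R] M)ˣ where
  carrier := {g | ∀ x, f (g.1 x) = f x}
  one_mem' _ := rfl
  mul_mem' {g h} hg hh x := (hg (h.1 x)).trans (hh x)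
  inv_mem' {g} hg x := by
    have := hg ((g⁻¹).1 x)
    rwa [← Module.End.mul_apply, ← Units.val_mul, mul_inv_cancel, Units.val_one,
      Module.End.one_apply, eq_comm] at this

theorem two_mul_apply_eq_zero_of_mul_eq_neg_one {f : Module.Dual R M} {v : M}
    {g h : (M →ₗ[R] M)ˣ} (hg : g ∈ dualStabilizer f)
    (hh : h ∈ MulAction.stabilizer (M →ₗ[R] M)ˣ v)
    (hgh : g * h = -1) : 2 * f v = 0 := by
  have hgv : g.1 v = -v := by
    have := congrArg (fun u : (M →ₗ[R] M)ˣ => u.1 v) hgh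
    simp only [Units.val_mul, Module.End.mul_apply, Units.val_neg, Units.val_one] at this
    rwa [show h.1 v = v from hh] at this
  have := hg v
  rw [hgv, map_neg] at this
  linear_combination -this

variable (B : LinearMap.BilinForm R M) {g : (M →ₗ[R] M)ˣ} {a : M} {k : R}

theorem mem_dualStabilizer_of_reflection (hg : ∀ x, g.1 x = x - (2 * B x a * k) • a)
    {w : M} (haw : B a w = 0) : g ∈ dualStabilizer (B.flip w) := fun x => by
  simp [hg, haw]

theorem mem_stabilizer_of_reflection (hg : ∀ x, g.1 x = x - (2 * B x a * k) • a)
    {v : M} (hva : B v a = 0) : g ∈ MulAction.stabilizer (M →ₗ[R] M)ˣ v := by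
  simp [MulAction.mem_stabilizer_iff, Units.smul_def, hg, hva]

variable {ι : Type*} {r : ι → (M →ₗ[R] M)ˣ} {b : ι → M} {c : ι → R}

theorem closure_le_dualStabilizer (hr : ∀ i x, (r i).1 x = x - (2 * B x (b i) * c i) • b i)
    {S : Set ι} {w : M} (hS : ∀ i ∈ S, B (b i) w = 0) :
    Subgroup.closure (r '' S) ≤ dualStabilizer (B.flip w) :=
  (Subgroup.closure_le _).2 <| by
    rintro - ⟨i, hi, rfl⟩
    exact mem_dualStabilizer_of_reflection B (hr i) (hS i hi)

theorem closure_le_stabilizer (hr : ∀ i x, (r i).1 x = x - (2 * B x (b i) * c i) • b i)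
    {S : Set ι} {v : M} (hS : ∀ i ∈ S, B v (b i) = 0) :
    Subgroup.closure (r '' S) ≤ MulAction.stabilizer (M →ₗ[R] M)ˣ v :=
  (Subgroup.closure_le _).2 <| by
    rintro - ⟨i, hi, rfl⟩
    exact mem_stabilizer_of_reflection B (hr i) (hS i hi)

end Reflection

theorem form_eq_toBilin' (p : ℕ) : form p = fun x y => toBilin' (gram p) x y := by
  ext x y
  rw [toBilin'_apply, form]

def v₀ (p : ℕ) : Fin 5 → ZMod p := ![1, 4, 6, 4, 2]

def v₄ (p : ℕ) : Fin 5 → ZMod p := ![1, 2, 2, 1, 0]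

section OddPrime

variable {p : ℕ} [Fact p.Prime]

theorem two_ne_zero_zmod (hodd : p ≠ 2) : (2 : ZMod p) ≠ 0 :=
  Ring.two_ne_zero (by rwa [ZMod.ringChar_zmod_n])

theorem vecMul_gram_v₀ (hodd : p ≠ 2) : v₀ p ᵥ* gram p = Pi.single 0 (-2) := by
  have := two_ne_zero_zmod hodd
  ext j
  fin_cases j <;> simp [v₀, gram, vecMul, dotProduct, Fin.sum_univ_five] <;> field_simp <;> ring

theorem gram_mulVec_v₄ (hodd : p ≠ 2) : gram p *ᵥ v₄ p = Pi.single 4 (-1) := by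
  have := two_ne_zero_zmod hodd
  ext i
  fin_cases i <;> simp [v₄, gram, mulVec, dotProduct, Fin.sum_univ_five] <;> field_simp <;> ring

theorem toBilin'_gram_single_v₄ (hodd : p ≠ 2) {i : Fin 5} (hi : i ≠ 4) :
    toBilin' (gram p) (Pi.single i 1) (v₄ p) = 0 := by
  rw [toBilin'_apply', gram_mulVec_v₄ hodd, single_dotProduct, Pi.single_eq_of_ne hi, mul_zero]

theorem toBilin'_gram_v₀_single (hodd : p ≠ 2) {i : Fin 5} (hi : i ≠ 0) :
    toBilin' (gram p) (v₀ p) (Pi.single i 1) = 0 := by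
  rw [toBilin'_apply', dotProduct_mulVec, vecMul_gram_v₀ hodd, dotProduct_single,
    Pi.single_eq_of_ne hi, zero_mul]

theorem toBilin'_gram_v₀_v₄ (hodd : p ≠ 2) : toBilin' (gram p) (v₀ p) (v₄ p) = -2 := by
  rw [toBilin'_apply', dotProduct_mulVec, vecMul_gram_v₀ hodd, single_dotProduct]
  simp [v₄]

end OddPrime

/-- for every odd prime `p`, the map `−id` on `V = (ZMod p)^5` does not lie
in the product set `G₄ᵖ ⬝ G₀ᵖ`, where `G₄ᵖ = ⟨r₀, r₁, r₂, r₃⟩` and `G₀ᵖ = ⟨r₁, r₂, r₃, r₄⟩`;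
equivalently `{±id} ∩ G₄ᵖ G₀ᵖ = {id}`. -/
theorem statement17 (p : ℕ) (hp : p.Prime) (hodd : p ≠ 2)
    (r : Fin 5 → GLV p) (hr : ReflHyp p r) :
    ∀ g ∈ Subgroup.closure (r '' {i : Fin 5 | i ≠ 4}),
      ∀ h ∈ Subgroup.closure (r '' {i : Fin 5 | i ≠ 0}),
        g * h ≠ (-1 : GLV p) := by
  have := Fact.mk hp
  set B := toBilin' (gram p)
  have hr' : ∀ i x, (r i).1 x = x - (2 * B x (Pi.single i 1) *
      (B (Pi.single i 1) (Pi.single i 1))⁻¹) • Pi.single i 1 := by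
    simpa only [ReflHyp, form_eq_toBilin'] using hr
  intro g hg h hh hgh
  have hG₄ := closure_le_dualStabilizer B hr' (fun _ hi => toBilin'_gram_single_v₄ hodd hi) hg
  have hG₀ := closure_le_stabilizer B hr' (fun _ hi => toBilin'_gram_v₀_single hodd hi) hh
  have h4 := two_mul_apply_eq_zero_of_mul_eq_neg_one hG₄ hG₀ hgh
  rw [LinearMap.BilinForm.flip_apply, toBilin'_gram_v₀_v₄ hodd] at h4
  exact two_ne_zero_zmod hodd (mul_self_eq_zero.1 (by linear_combination -h4))

end Statement17
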